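/- Let ν ≥ 1/2 and let a_n be the Taylor coefficients of z·B_ν(z) (a_1 = 1, a_n = Γ(ν+1) Γ(n/2) / (√π (n−1)! Γ((n+1)/2 + ν)) for n ≥ 2). Then for all n ≥ 1, n·a_n − (n+1)·a_{n+1} ≥ 0. -/

import Mathlib

/-!
Because `Γ(1/2) = √π`, the closed formula for `a n` gives `a 1 = 1` as well, so one argument
covers every `n ≥ 1`. With `x = n/2`, clearing the factorials and applying `Γ(s + 1) = s Γ(s)`
twice turns `(n + 1) a_{n+1} ≤ n a_n` into `Γ(x + 3/2) Γ(x + 1/2 + ν) ≤ 2x Γ(x + 1) Γ(x + 1 + ν)`.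
Since `log Γ` is convex, its increment over a step of `1/2` grows with the base point. For
`ν ≥ 1/2` we have `x + 1 ≤ x + 1/2 + ν`, so this gives the inequality without the factor `2x = n`,
and `n ≥ 1`.
-/

open Real

theorem ConvexOn.sub_le_sub_of_le {𝕜 : Type*} [Field 𝕜] [LinearOrder 𝕜] [IsStrictOrderedRing 𝕜]
    {s : Set 𝕜} {f : 𝕜 → 𝕜} (hf : ConvexOn 𝕜 s f) {a b t : 𝕜} (ha : a ∈ s) (hb : b ∈ s)
    (hat : a + t ∈ s) (hbt : b + t ∈ s) (hab : a ≤ b) (ht : 0 ≤ t) :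
    f (a + t) - f a ≤ f (b + t) - f b := by
  rcases ht.eq_or_lt with rfl | ht
  · simp
  have h₁ := hf.secant_mono ha hat hbt (by linarith) (by linarith) (by linarith)
  have h₂ := hf.secant_mono hbt ha hb (by linarith) (by linarith) hab
  rw [add_sub_cancel_left] at h₁
  rw [← neg_div_neg_eq, neg_sub, neg_sub, ← neg_div_neg_eq (f b - _), neg_sub, neg_sub,
    add_sub_cancel_left] at h₂
  exact (div_le_div_iff_of_pos_right ht).1 (h₁.trans h₂)

namespace Real

theorem Gamma_add_mul_Gamma_le {a b t : ℝ} (ha : 0 < a) (hab : a ≤ b) (ht : 0 ≤ t) :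
    Gamma (a + t) * Gamma b ≤ Gamma a * Gamma (b + t) := by
  have hb : 0 < b := ha.trans_le hab
  have hat : 0 < a + t := by linarith
  have hbt : 0 < b + t := by linarith
  have hlog := convexOn_log_Gamma.sub_le_sub_of_le ha hb hat hbt hab ht
  simp only [Function.comp_apply] at hlog
  have := Gamma_pos_of_pos ha
  have := Gamma_pos_of_pos hb
  have := Gamma_pos_of_pos hat
  have := Gamma_pos_of_pos hbt
  rw [← log_le_log_iff (by positivity) (by positivity), log_mul (by positivity) (by positivity),
    log_mul (by positivity) (by positivity)]
  linarith

theorem add_one_mul_Gamma_mul_Gamma_le {ν m : ℝ} (hν : 1 / 2 ≤ ν) (hm : 1 ≤ m) :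
    (m + 1) * (Gamma ((m + 1) / 2) * Gamma ((m + 1) / 2 + ν)) ≤
      m ^ 2 * (Gamma (m / 2) * Gamma ((m + 1 + 1) / 2 + ν)) := by
  have key := Gamma_add_mul_Gamma_le (a := m / 2 + 1) (b := (m + 1) / 2 + ν) (t := 1 / 2)
    (by positivity) (by linarith) (by norm_num)
  rw [show m / 2 + 1 + 1 / 2 = (m + 1) / 2 + 1 by ring, Gamma_add_one (by positivity),
    Gamma_add_one (by positivity), show (m + 1) / 2 + ν + 1 / 2 = (m + 1 + 1) / 2 + ν by ring]
    at key
  have := Gamma_pos_of_pos (show 0 < m / 2 by positivity)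
  have := Gamma_pos_of_pos (show 0 < (m + 1 + 1) / 2 + ν by linarith)
  calc (m + 1) * (Gamma ((m + 1) / 2) * Gamma ((m + 1) / 2 + ν))
      = 2 * ((m + 1) / 2 * Gamma ((m + 1) / 2) * Gamma ((m + 1) / 2 + ν)) := by ring
    _ ≤ 2 * (m / 2 * Gamma (m / 2) * Gamma ((m + 1 + 1) / 2 + ν)) := by gcongr
    _ = m * (Gamma (m / 2) * Gamma ((m + 1 + 1) / 2 + ν)) := by ring
    _ ≤ m ^ 2 * (Gamma (m / 2) * Gamma ((m + 1 + 1) / 2 + ν)) := by gcongr; nlinarith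

end Real

noncomputable def besselStruveCoeff (ν : ℝ) (n : ℕ) : ℝ :=
  Gamma (ν + 1) * Gamma ((n : ℝ) / 2) /
    (sqrt π * ((n - 1).factorial : ℝ) * Gamma (((n : ℝ) + 1) / 2 + ν))

theorem besselStruveCoeff_one {ν : ℝ} (hν : -1 < ν) : besselStruveCoeff ν 1 = 1 := by
  have := Gamma_pos_of_pos (show 0 < ν + 1 by linarith)
  rw [besselStruveCoeff, Nat.cast_one, Gamma_one_half_eq, Nat.sub_self, Nat.factorial_zero,
    Nat.cast_one, mul_one, one_add_one_eq_two, div_self two_ne_zero,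
    add_comm 1 ν, mul_comm, div_self]
  positivity

theorem besselStruveCoeff_succ_mul_le {ν : ℝ} (hν : 1 / 2 ≤ ν) {n : ℕ} (hn : 1 ≤ n) :
    ((n : ℝ) + 1) * besselStruveCoeff ν (n + 1) ≤ n * besselStruveCoeff ν n := by
  have hfac : (n.factorial : ℝ) = n * ((n - 1).factorial : ℝ) := by
    rw [← Nat.mul_factorial_pred (by omega), Nat.cast_mul]
  have hn' : (1 : ℝ) ≤ n := by exact_mod_cast hn
  have := Gamma_pos_of_pos (show 0 < ν + 1 by linarith)
  have := Gamma_pos_of_pos (show 0 < ((n : ℝ) + 1) / 2 + ν by positivity)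
  have := Gamma_pos_of_pos (show 0 < ((n : ℝ) + 1 + 1) / 2 + ν by positivity)
  have := Gamma_pos_of_pos (show 0 < ((n : ℝ) + 1) / 2 by positivity)
  have := Gamma_pos_of_pos (show 0 < (n : ℝ) / 2 by positivity)
  simp only [besselStruveCoeff, Nat.add_sub_cancel, Nat.cast_add, Nat.cast_one, hfac]
  rw [← mul_div_assoc, ← mul_div_assoc, div_le_div_iff₀ (by positivity) (by positivity)]
  have key := add_one_mul_Gamma_mul_Gamma_le hν hn'
  calc _ = (sqrt π * ((n - 1).factorial : ℝ) * Gamma (ν + 1)) *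
        (((n : ℝ) + 1) * (Gamma (((n : ℝ) + 1) / 2) * Gamma (((n : ℝ) + 1) / 2 + ν))) := by ring
    _ ≤ (sqrt π * ((n - 1).factorial : ℝ) * Gamma (ν + 1)) *
        ((n : ℝ) ^ 2 * (Gamma ((n : ℝ) / 2) * Gamma (((n : ℝ) + 1 + 1) / 2 + ν))) := by gcongr
    _ = _ := by ring

theorem coeff_first_difference_nonneg (ν : ℝ) (hν : 1/2 ≤ ν) (a : ℕ → ℝ) (ha1 : a 1 = 1)
    (ha : ∀ n : ℕ, 2 ≤ n → a n = Real.Gamma (ν + 1) * Real.Gamma ((n : ℝ) / 2) /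
      (Real.sqrt Real.pi * ((n - 1).factorial : ℝ) * Real.Gamma (((n : ℝ) + 1) / 2 + ν))) :
    ∀ n : ℕ, 1 ≤ n → (n : ℝ) * a n - ((n : ℝ) + 1) * a (n + 1) ≥ 0 := by
  have ha' : ∀ n : ℕ, 1 ≤ n → a n = besselStruveCoeff ν n := by
    intro n hn
    rcases hn.eq_or_lt with rfl | hn
    · rw [ha1, besselStruveCoeff_one (by linarith)]
    · exact ha n hn
  intro n hn
  rw [ha' n hn, ha' (n + 1) (by omega), ge_iff_le, sub_nonneg]
  exact besselStruveCoeff_succ_mul_le hν hn
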